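/- For $\alpha>2$ the series $\sum_{i,j}\frac{(i+j)^{2(1-\alpha)}(1+a^2(i+j)^2)^{(1-\alpha)s}}{i^4 j^4 (1+a^2 i^2)^{2s}(1+a^2 j^2)^{2s}}(\alpha_{j,i+j} + \alpha_{i,i+j})^2$ (the squared Hilbert-Schmidt norm of the second derivative $\nabla^2 B$, which is constant in $\varphi$) converges. -/

import Mathlib

noncomputable section

open scoped Real

/-- squared Euclidean norm `|k|² = k₁² + k₂²` of a lattice point. -/
def latSq (k : ℤ × ℤ) : ℝ := (k.1 : ℝ) ^ 2 + (k.2 : ℝ) ^ 2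

/-- `k > 0` for lattice points: `k₁ > 0`, or `k₁ = 0` and `k₂ > 0`. -/
def PosMode (k : ℤ × ℤ) : Prop := 0 < k.1 ∨ (k.1 = 0 ∧ 0 < k.2)

/-- `h^⊥ = (-h₂, h₁)`. -/
def perp (h : ℤ × ℤ) : ℤ × ℤ := (-h.2, h.1)

/-- Euclidean dot product of lattice points. -/
def ldot (h k : ℤ × ℤ) : ℝ := ((h.1 * k.1 + h.2 * k.2 : ℤ) : ℝ)

/-- The averaged-Euler interaction coefficients
`α_{h,k} = (1/2π)[(h^⊥·k)(h·k)/k² - (h^⊥·k)/2] (1+a²(k-h)²)^s/(1+a²k²)^s`. -/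
def acoef (a s : ℝ) (h k : ℤ × ℤ) : ℝ :=
  (1 / (2 * π)) * (ldot (perp h) k * ldot h k / latSq k - ldot (perp h) k / 2) *
    (1 + a ^ 2 * latSq (k - h)) ^ s / (1 + a ^ 2 * latSq k) ^ s

/-!
Write `k = i + j` and `β = j^⊥·i = j^⊥·k = -(i^⊥·k)`. Both brackets in `α_{j,k}` and `α_{i,k}`
equal `β(|j|² - |i|²)/(2|k|²)`, so their sum is this times
`((1 + a²|i|²)^s + (1 + a²|j|²)^s)/(2π(1 + a²|k|²)^s)`. Cauchy–Schwarz gives `β² ≤ |i|²|j|²` and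
`(|j|² - |i|²)² = ((j - i)·k)² ≤ 2(|i|² + |j|²)|k|²`, so the summand is at most a constant times
`|k|^{-2α} (|i|^{-2} + |j|^{-2}) ((1 + a²|i|²)^{-2s} + (1 + a²|j|²)^{-2s})`.
Since `|j|² ≤ 2(|k|² + |i|²)`, a factor `|j|^{2q}` with `0 < q ≤ min (2s) (α - 2)` is absorbed by
`|k|^{-2α}` or by the weight of `i`. This bounds the summand by a constant times
`|k|^{-4} (|i|^{-2(1+q)} + |j|^{-2(1+q)})`, which is summable in `(i, k)` resp. `(j, k)`.
-/

lemma latSq_nonneg (m : ℤ × ℤ) : 0 ≤ latSq m := by unfold latSq; positivity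

lemma one_le_latSq {m : ℤ × ℤ} (hm : m ≠ 0) : 1 ≤ latSq m := by
  have hcoord : m.1 ≠ 0 ∨ m.2 ≠ 0 := by
    contrapose! hm
    exact Prod.ext hm.1 hm.2
  have hpos : 0 < m.1 ^ 2 + m.2 ^ 2 := by rcases hcoord with h | h <;> positivity
  unfold latSq
  exact_mod_cast Order.one_le_iff_pos.mpr hpos

lemma posMode_ne_zero {k : ℤ × ℤ} (h : PosMode k) : k ≠ 0 := by
  rintro rfl
  simp [PosMode] at h

lemma ldot_sq_le (m n : ℤ × ℤ) : ldot m n ^ 2 ≤ latSq m * latSq n := by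
  unfold ldot latSq
  push_cast
  nlinarith [sq_nonneg ((m.1 : ℝ) * n.2 - m.2 * n.1)]

lemma latSq_perp (m : ℤ × ℤ) : latSq (perp m) = latSq m := by
  simp only [latSq, perp]
  push_cast
  ring

lemma latSq_sub_le (m n : ℤ × ℤ) : latSq (m - n) ≤ 2 * (latSq m + latSq n) := by
  simp only [latSq, Prod.fst_sub, Prod.snd_sub]
  push_cast
  nlinarith [sq_nonneg ((m.1 : ℝ) + n.1), sq_nonneg ((m.2 : ℝ) + n.2)]

lemma sq_latSq_sub_latSq_le (i j : ℤ × ℤ) :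
    (latSq j - latSq i) ^ 2 ≤ 2 * (latSq i + latSq j) * latSq (i + j) := by
  have hdiff : latSq j - latSq i = ldot (j - i) (i + j) := by
    simp only [latSq, ldot, Prod.fst_sub, Prod.snd_sub, Prod.fst_add, Prod.snd_add]
    push_cast
    ring
  calc (latSq j - latSq i) ^ 2 ≤ latSq (j - i) * latSq (i + j) := hdiff ▸ ldot_sq_le _ _
    _ ≤ 2 * (latSq i + latSq j) * latSq (i + j) := by
      rw [add_comm (latSq i)]
      gcongr
      · exact latSq_nonneg _
      · exact latSq_sub_le j i

lemma acoef_add_acoef (a s : ℝ) (i j : ℤ × ℤ) (hij : latSq (i + j) ≠ 0) :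
    acoef a s j (i + j) + acoef a s i (i + j)
      = 1 / (2 * π) * (ldot (perp j) i * (latSq j - latSq i) / (2 * latSq (i + j)))
          * ((1 + a ^ 2 * latSq i) ^ s + (1 + a ^ 2 * latSq j) ^ s)
          / (1 + a ^ 2 * latSq (i + j)) ^ s := by
  unfold acoef
  rw [add_sub_cancel_right, add_sub_cancel_left]
  field_simp
  simp only [latSq, ldot, perp, Prod.fst_add, Prod.snd_add]
  push_cast
  ring

lemma norm_sq_le_latSq (m : ℤ × ℤ) : ‖m‖ ^ 2 ≤ latSq m := by
  rw [Prod.norm_def, Int.norm_eq_abs, Int.norm_eq_abs, latSq]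
  rcases le_total |(m.1 : ℝ)| |(m.2 : ℝ)| with h | h
  · rw [max_eq_right h, sq_abs]; nlinarith [sq_nonneg (m.1 : ℝ)]
  · rw [max_eq_left h, sq_abs]; nlinarith [sq_nonneg (m.2 : ℝ)]

lemma summable_latSq_rpow_neg {p : ℝ} (hp : 1 < p) :
    Summable fun m : ℤ × ℤ ↦ latSq m ^ (-p) := by
  have hnorm : Summable fun m : ℤ × ℤ ↦ (‖m‖ ^ 2) ^ (-p) := by
    rw [← (finTwoArrowEquiv ℤ).summable_iff]
    refine (EisensteinSeries.summable_one_div_norm_rpow (by linarith : 2 < 2 * p)).congr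
      fun x ↦ ?_
    simp only [Function.comp_apply]
    rw [← Real.rpow_natCast, ← Real.rpow_mul (norm_nonneg _)]
    simp [EisensteinSeries.norm_eq_max_natAbs, Prod.norm_def, Int.norm_eq_abs, finTwoArrowEquiv,
      mul_comm]
  refine hnorm.of_nonneg_of_le (fun m ↦ Real.rpow_nonneg (latSq_nonneg m) _) fun m ↦ ?_
  rcases eq_or_ne m 0 with rfl | hm
  · simp [latSq, Real.zero_rpow (by linarith : -p ≠ 0)]
  · exact Real.rpow_le_rpow_of_nonpos (by positivity) (norm_sq_le_latSq m) (by linarith)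

lemma summable_latSq_add_rpow_neg_mul_latSq_rpow_neg {p r : ℝ} (hp : 1 < p) (hr : 1 < r) :
    Summable fun x : (ℤ × ℤ) × (ℤ × ℤ) ↦ latSq (x.1 + x.2) ^ (-r) * latSq x.1 ^ (-p) := by
  have hprod := (summable_latSq_rpow_neg hr).mul_of_nonneg (summable_latSq_rpow_neg hp)
    (fun m ↦ Real.rpow_nonneg (latSq_nonneg m) _) (fun m ↦ Real.rpow_nonneg (latSq_nonneg m) _)
  have hinj : Function.Injective fun x : (ℤ × ℤ) × (ℤ × ℤ) ↦ (x.1 + x.2, x.1) := by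
    intro x y hxy
    simp only [Prod.mk.injEq] at hxy
    obtain ⟨hsum, h1⟩ := hxy
    exact Prod.ext h1 (by rwa [h1, add_right_inj] at hsum)
  simpa only [Function.comp_def] using hprod.comp_injective hinj

lemma rpow_le_inv_rpow_mul_one_add_mul_rpow {e L q t : ℝ} (he : 0 < e) (hL : 1 ≤ L)
    (hqt : q ≤ t) (ht : 0 ≤ t) : L ^ q ≤ (e ^ t)⁻¹ * (1 + e * L) ^ t := by
  have hL0 : 0 ≤ L := by linarith
  calc L ^ q ≤ L ^ t := Real.rpow_le_rpow_of_exponent_le hL hqt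
    _ = (e ^ t)⁻¹ * (e * L) ^ t := by
      rw [Real.mul_rpow he.le hL0, inv_mul_cancel_left₀ (Real.rpow_pos_of_pos he t).ne']
    _ ≤ (e ^ t)⁻¹ * (1 + e * L) ^ t := by gcongr; linarith

lemma rpow_le_four_rpow_mul_add {q x y z : ℝ} (hq : 0 ≤ q) (hx : 0 ≤ x) (hy : 0 ≤ y)
    (hz : 0 ≤ z) (h : z ≤ 2 * (x + y)) : z ^ q ≤ 4 ^ q * (x ^ q + y ^ q) := by
  have hx' := Real.rpow_nonneg hx q
  have hy' := Real.rpow_nonneg hy q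
  have h4 : 0 ≤ (4 : ℝ) ^ q := by positivity
  rcases le_total x y with hxy | hxy
  · calc z ^ q ≤ (4 * y) ^ q := by gcongr; linarith
      _ ≤ 4 ^ q * (x ^ q + y ^ q) := by rw [Real.mul_rpow (by norm_num) hy]; nlinarith
  · calc z ^ q ≤ (4 * x) ^ q := by gcongr; linarith
      _ ≤ 4 ^ q * (x ^ q + y ^ q) := by rw [Real.mul_rpow (by norm_num) hx]; nlinarith

lemma rpow_neg_mul_rpow_mul_inv_add_inv_le {e t α q u v w : ℝ} (he : 0 < e) (hq : 0 ≤ q)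
    (hqt : q ≤ t) (hqα : q ≤ α - 2) (hu : 1 ≤ u) (hv : 1 ≤ v) (hw : 1 ≤ w)
    (huvw : v ≤ 2 * (w + u)) :
    w ^ (-α) * v ^ q * (((1 + e * u) ^ t)⁻¹ + ((1 + e * v) ^ t)⁻¹)
      ≤ (1 + 4 ^ q) * (1 + (e ^ t)⁻¹) * w ^ (-2 : ℝ) := by
  have ht : 0 ≤ t := hq.trans hqt
  have hw0 : 0 < w := by linarith
  have hAu : 0 < (1 + e * u) ^ t := Real.rpow_pos_of_pos (by nlinarith) t
  have hAv : 0 < (1 + e * v) ^ t := Real.rpow_pos_of_pos (by nlinarith) t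
  have hAu1 : ((1 + e * u) ^ t)⁻¹ ≤ 1 :=
    inv_le_one_of_one_le₀ (Real.one_le_rpow (by nlinarith) ht)
  have hwα : w ^ (-α) ≤ w ^ (-2 : ℝ) := Real.rpow_le_rpow_of_exponent_le hw (by linarith)
  have hwq : w ^ (-α) * w ^ q ≤ w ^ (-2 : ℝ) := by
    rw [← Real.rpow_add hw0]
    exact Real.rpow_le_rpow_of_exponent_le hw (by linarith)
  have hvv : v ^ q * ((1 + e * v) ^ t)⁻¹ ≤ (e ^ t)⁻¹ := by
    rw [mul_inv_le_iff₀ hAv]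
    exact rpow_le_inv_rpow_mul_one_add_mul_rpow he hv hqt ht
  have huu : u ^ q * ((1 + e * u) ^ t)⁻¹ ≤ (e ^ t)⁻¹ := by
    rw [mul_inv_le_iff₀ hAu]
    exact rpow_le_inv_rpow_mul_one_add_mul_rpow he hu hqt ht
  have hvu : v ^ q ≤ 4 ^ q * (w ^ q + u ^ q) :=
    rpow_le_four_rpow_mul_add hq hw0.le (by linarith) (by linarith) huvw
  have hw2 : 0 ≤ w ^ (-2 : ℝ) := by positivity
  set Au := ((1 + e * u) ^ t)⁻¹
  set Av := ((1 + e * v) ^ t)⁻¹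
  -- in `v ^ q ≤ 4 ^ q (w ^ q + u ^ q)`, `w ^ q` is absorbed by `w ^ (-α)` and `u ^ q` by `Au`
  calc w ^ (-α) * v ^ q * (Au + Av) = w ^ (-α) * (v ^ q * Au) + w ^ (-α) * (v ^ q * Av) := by
        ring
    _ ≤ w ^ (-α) * (4 ^ q * (w ^ q + u ^ q) * Au) + w ^ (-2 : ℝ) * (e ^ t)⁻¹ := by
        gcongr
    _ = 4 ^ q * (w ^ (-α) * w ^ q * Au + w ^ (-α) * (u ^ q * Au)) + w ^ (-2 : ℝ) * (e ^ t)⁻¹ := by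
        ring
    _ ≤ 4 ^ q * (w ^ (-2 : ℝ) * 1 + w ^ (-2 : ℝ) * (e ^ t)⁻¹) + w ^ (-2 : ℝ) * (e ^ t)⁻¹ := by
        gcongr
    _ ≤ (1 + 4 ^ q) * (1 + (e ^ t)⁻¹) * w ^ (-2 : ℝ) := by
        nlinarith [Real.rpow_nonneg (by norm_num : (0 : ℝ) ≤ 4) q]

lemma rpow_neg_mul_inv_mul_inv_add_inv_le {e t α q u v w : ℝ} (he : 0 < e) (hq : 0 ≤ q)
    (hqt : q ≤ t) (hqα : q ≤ α - 2) (hu : 1 ≤ u) (hv : 1 ≤ v) (hw : 1 ≤ w)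
    (huvw : v ≤ 2 * (w + u)) :
    w ^ (-α) * v⁻¹ * (((1 + e * u) ^ t)⁻¹ + ((1 + e * v) ^ t)⁻¹)
      ≤ (1 + 4 ^ q) * (1 + (e ^ t)⁻¹) * (w ^ (-2 : ℝ) * v ^ (-(1 + q))) := by
  have hvq : v⁻¹ = v ^ (-(1 + q)) * v ^ q := by
    rw [← Real.rpow_add (by linarith), show -(1 + q) + q = -1 by ring, Real.rpow_neg_one]
  have hv' : 0 ≤ v ^ (-(1 + q)) := Real.rpow_nonneg (by linarith) _
  rw [hvq]
  linear_combination
    mul_le_mul_of_nonneg_left (rpow_neg_mul_rpow_mul_inv_add_inv_le he hq hqt hqα hu hv hw huvw) hv'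

lemma prefactor_mul_sq_le {c β K Y Li Lj Lk Pi Pj Pk : ℝ} (hK : 0 ≤ K)
    (hY : Y ≤ 1) (hPk : 1 ≤ Pk) (hPi : 0 < Pi) (hPj : 0 < Pj) (hLi : 0 < Li) (hLj : 0 < Lj)
    (hLk : 0 < Lk) (hβ : β ^ 2 ≤ Li * Lj) (hD : (Lj - Li) ^ 2 ≤ 2 * (Li + Lj) * Lk) :
    K * Y / (Li ^ 2 * Lj ^ 2 * Pi ^ 2 * Pj ^ 2)
        * (c * (β * (Lj - Li) / (2 * Lk)) * (Pi + Pj) / Pk) ^ 2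
      ≤ c ^ 2 * (K / Lk) * ((Li⁻¹ + Lj⁻¹) * ((Pi ^ 2)⁻¹ + (Pj ^ 2)⁻¹)) := by
  have hPk0 : 0 < Pk := by linarith
  have hP : (Pi + Pj) ^ 2 ≤ 2 * (Pi ^ 2 + Pj ^ 2) := by nlinarith [sq_nonneg (Pi - Pj)]
  calc K * Y / (Li ^ 2 * Lj ^ 2 * Pi ^ 2 * Pj ^ 2)
        * (c * (β * (Lj - Li) / (2 * Lk)) * (Pi + Pj) / Pk) ^ 2
      = c ^ 2 * K * Y * β ^ 2 * (Lj - Li) ^ 2 * (Pi + Pj) ^ 2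
          / (4 * Lk ^ 2 * Li ^ 2 * Lj ^ 2 * Pi ^ 2 * Pj ^ 2 * Pk ^ 2) := by
        field_simp; ring
    _ ≤ c ^ 2 * K * 1 * (Li * Lj) * (2 * (Li + Lj) * Lk) * (2 * (Pi ^ 2 + Pj ^ 2))
          / (4 * Lk ^ 2 * Li ^ 2 * Lj ^ 2 * Pi ^ 2 * Pj ^ 2 * 1 ^ 2) := by
        gcongr
    _ = c ^ 2 * (K / Lk) * ((Li⁻¹ + Lj⁻¹) * ((Pi ^ 2)⁻¹ + (Pj ^ 2)⁻¹)) := by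
        field_simp; ring

def hsSummand (a s α : ℝ) (i j : ℤ × ℤ) : ℝ :=
  latSq (i + j) ^ (1 - α) * (1 + a ^ 2 * latSq (i + j)) ^ ((1 - α) * s)
    / (latSq i ^ 2 * latSq j ^ 2 * (1 + a ^ 2 * latSq i) ^ (2 * s)
      * (1 + a ^ 2 * latSq j) ^ (2 * s))
    * (acoef a s j (i + j) + acoef a s i (i + j)) ^ 2

lemma hsSummand_nonneg (a s α : ℝ) (i j : ℤ × ℤ) : 0 ≤ hsSummand a s α i j := by
  have hA : ∀ m, 0 ≤ 1 + a ^ 2 * latSq m := fun m ↦ by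
    have := latSq_nonneg m
    positivity
  refine mul_nonneg (div_nonneg ?_ ?_) (sq_nonneg _)
  · exact mul_nonneg (Real.rpow_nonneg (latSq_nonneg _) _) (Real.rpow_nonneg (hA _) _)
  · exact mul_nonneg (mul_nonneg (by positivity) (Real.rpow_nonneg (hA i) _))
      (Real.rpow_nonneg (hA j) _)

lemma hsSummand_le_rpow_neg_mul {a s α : ℝ} (hs : 0 ≤ s) (hα : 1 ≤ α) {i j : ℤ × ℤ}
    (hi : i ≠ 0) (hj : j ≠ 0) (hij : i + j ≠ 0) :
    hsSummand a s α i j ≤ (1 / (2 * π)) ^ 2 * latSq (i + j) ^ (-α)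
      * (((latSq i)⁻¹ + (latSq j)⁻¹)
        * (((1 + a ^ 2 * latSq i) ^ (2 * s))⁻¹ + ((1 + a ^ 2 * latSq j) ^ (2 * s))⁻¹)) := by
  have hLi := one_le_latSq hi
  have hLj := one_le_latSq hj
  have hLk := one_le_latSq hij
  have hA : ∀ L : ℝ, 1 ≤ L → 1 ≤ 1 + a ^ 2 * L := fun L hL ↦ by nlinarith [sq_nonneg a]
  have hsq : ∀ L : ℝ, 1 ≤ L → (1 + a ^ 2 * L) ^ (2 * s) = ((1 + a ^ 2 * L) ^ s) ^ 2 :=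
    fun L hL ↦ by
      rw [← Real.rpow_mul_natCast (by linarith [hA L hL]), Nat.cast_ofNat, mul_comm s]
  have hβ : ldot (perp j) i ^ 2 ≤ latSq i * latSq j := by
    simpa only [latSq_perp, mul_comm] using ldot_sq_le (perp j) i
  unfold hsSummand
  rw [acoef_add_acoef a s i j (by linarith), hsq _ hLi, hsq _ hLj, ← sub_sub_cancel_left 1 α,
    Real.rpow_sub_one (by linarith)]
  exact prefactor_mul_sq_le (Li := latSq i) (Lj := latSq j) (Lk := latSq (i + j))
    (Pi := (1 + a ^ 2 * latSq i) ^ s) (Pj := (1 + a ^ 2 * latSq j) ^ s)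
    (Y := (1 + a ^ 2 * latSq (i + j)) ^ ((1 - α) * s))
    (Real.rpow_nonneg (latSq_nonneg (i + j)) (1 - α))
    (Real.rpow_le_one_of_one_le_of_nonpos (hA _ hLk) (by nlinarith))
    (Real.one_le_rpow (hA _ hLk) hs) (Real.rpow_pos_of_pos (by linarith [hA _ hLi]) s)
    (Real.rpow_pos_of_pos (by linarith [hA _ hLj]) s) (by linarith) (by linarith) (by linarith)
    hβ (sq_latSq_sub_latSq_le i j)

lemma hsSummand_le {a s α q : ℝ} (ha : a ≠ 0) (hq : 0 ≤ q) (hqs : q ≤ 2 * s)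
    (hqα : q ≤ α - 2) {i j : ℤ × ℤ} (hi : i ≠ 0) (hj : j ≠ 0) (hij : i + j ≠ 0) :
    hsSummand a s α i j ≤ (1 / (2 * π)) ^ 2 * ((1 + 4 ^ q) * (1 + ((a ^ 2) ^ (2 * s))⁻¹))
      * (latSq (i + j) ^ (-2 : ℝ) * latSq i ^ (-(1 + q))
        + latSq (i + j) ^ (-2 : ℝ) * latSq j ^ (-(1 + q))) := by
  have he : 0 < a ^ 2 := by positivity
  have hLi := one_le_latSq hi
  have hLj := one_le_latSq hj
  have hLk := one_le_latSq hij
  have hweight_i := rpow_neg_mul_inv_mul_inv_add_inv_le he hq hqs hqα hLj hLi hLk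
    (by simpa using latSq_sub_le (i + j) j)
  have hweight_j := rpow_neg_mul_inv_mul_inv_add_inv_le he hq hqs hqα hLi hLj hLk
    (by simpa using latSq_sub_le (i + j) i)
  refine (hsSummand_le_rpow_neg_mul (by linarith) (by linarith) hi hj hij).trans ?_
  have hc : 0 ≤ (1 / (2 * π)) ^ 2 := sq_nonneg _
  linear_combination mul_le_mul_of_nonneg_left (add_le_add hweight_i hweight_j) hc

/-- For `α > 2` the series giving the squared Hilbert-Schmidt norm of `∇²B`,
`∑_{i,j} (i+j)^{2(1-α)}(1+a²(i+j)²)^{(1-α)s} (α_{j,i+j}+α_{i,i+j})²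
  / (i⁴j⁴(1+a²i²)^{2s}(1+a²j²)^{2s})`, converges. -/
theorem secondDerivative_HS_series_summable (a s α : ℝ) (ha : a ≠ 0) (hs : 0 < s)
    (hα : 2 < α) :
    Summable (fun q : {q : (ℤ × ℤ) × (ℤ × ℤ) //
        q.1 ≠ 0 ∧ q.2 ≠ 0 ∧ PosMode (q.1 + q.2)} =>
      latSq ((q : (ℤ × ℤ) × (ℤ × ℤ)).1 + (q : (ℤ × ℤ) × (ℤ × ℤ)).2) ^ (1 - α)
        * (1 + a ^ 2 * latSq ((q : (ℤ × ℤ) × (ℤ × ℤ)).1 + (q : (ℤ × ℤ) × (ℤ × ℤ)).2))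
            ^ ((1 - α) * s)
        / (latSq (q : (ℤ × ℤ) × (ℤ × ℤ)).1 ^ 2 * latSq (q : (ℤ × ℤ) × (ℤ × ℤ)).2 ^ 2
            * (1 + a ^ 2 * latSq (q : (ℤ × ℤ) × (ℤ × ℤ)).1) ^ (2 * s)
            * (1 + a ^ 2 * latSq (q : (ℤ × ℤ) × (ℤ × ℤ)).2) ^ (2 * s))
        * (acoef a s (q : (ℤ × ℤ) × (ℤ × ℤ)).2
              ((q : (ℤ × ℤ) × (ℤ × ℤ)).1 + (q : (ℤ × ℤ) × (ℤ × ℤ)).2)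
            + acoef a s (q : (ℤ × ℤ) × (ℤ × ℤ)).1
              ((q : (ℤ × ℤ) × (ℤ × ℤ)).1 + (q : (ℤ × ℤ) × (ℤ × ℤ)).2)) ^ 2) := by
  obtain ⟨q, hq, hqs, hqα⟩ : ∃ q, 0 < q ∧ q ≤ 2 * s ∧ q ≤ α - 2 :=
    ⟨min (2 * s) (α - 2), lt_min (by linarith) (by linarith), min_le_left _ _, min_le_right _ _⟩
  have hi := summable_latSq_add_rpow_neg_mul_latSq_rpow_neg (p := 1 + q) (by linarith) one_lt_two
  have hj : Summable fun x : (ℤ × ℤ) × (ℤ × ℤ) ↦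
      latSq (x.1 + x.2) ^ (-2 : ℝ) * latSq x.2 ^ (-(1 + q)) :=
    (hi.comp_injective Prod.swap_injective).congr fun x ↦ by
      rw [Function.comp_apply, Prod.fst_swap, Prod.snd_swap, add_comm]
  refine Summable.of_nonneg_of_le (fun x ↦ hsSummand_nonneg a s α x.1.1 x.1.2)
    (fun x ↦ hsSummand_le ha hq.le hqs hqα x.2.1 x.2.2.1
      (posMode_ne_zero x.2.2.2)) (((hi.add hj).mul_left _).subtype _)
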